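/- arXiv:1211.1507 — 4 statements merged into one kernel-verified Lean document; each statement's English description precedes it below -/
import Mathlib

section
/- The eigenvalues of a real symmetric N×N matrix S and the eigenvalues of its (N-1)×(N-1) principal submatrix (obtained by deleting the last row and column) interlace: if x_1 ≥ x_2 ≥ ... ≥ x_N are the eigenvalues of S and y_1 ≥ ... ≥ y_{N-1} are the eigenvalues of the submatrix, then x_i ≥ y_i ≥ x_{i+1} for all 1 ≤ i ≤ N-1. -/
/-!
The eigenvectors of `S` whose eigenvalue is at most `x j` span a subspace of dimension at least
`N - j` on which `⟪w, S w⟫ ≤ x j ‖w‖²`. The eigenvectors of the submatrix whose eigenvalue is at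
least `y i`, extended by zero, span a subspace of dimension at least `i + 1` on which
`⟪w, S w⟫ ≥ y i ‖w‖²`, because the quadratic form of `S` restricts to that of the submatrix.
When `j ≤ i` the two dimensions add up to more than `N`, so the subspaces share a nonzero vector
and `y i ≤ x j`. Exchanging the roles of the two bounds gives `x (i + 1) ≤ y i`.
-/

open Module Submodule Finset Function Matrix
open scoped RealInnerProductSpace

theorem Orthonormal.inner_map_self_le_of_mem_span {ι E : Type*} [Fintype ι]
    [NormedAddCommGroup E] [InnerProductSpace ℝ E] {v : ι → E} (hv : Orthonormal ℝ v)
    {T : E →ₗ[ℝ] E} {μ : ι → ℝ} (hT : ∀ i, T (v i) = μ i • v i) {c : ℝ} (hc : ∀ i, μ i ≤ c)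
    {w : E} (hw : w ∈ span ℝ (Set.range v)) :
    ⟪w, T w⟫ ≤ c * ⟪w, w⟫ := by
  obtain ⟨a, rfl⟩ := (mem_span_range_iff_exists_fun ℝ).mp hw
  have hTw : T (∑ i, a i • v i) = ∑ i, (a i * μ i) • v i := by
    simp [map_sum, hT, smul_smul]
  rw [hTw, hv.inner_sum, hv.inner_sum, Finset.mul_sum]
  refine Finset.sum_le_sum fun i _ => ?_
  simp only [conj_trivial]
  nlinarith [hc i, mul_self_nonneg (a i)]

theorem Orthonormal.le_inner_map_self_of_mem_span {ι E : Type*} [Fintype ι]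
    [NormedAddCommGroup E] [InnerProductSpace ℝ E] {v : ι → E} (hv : Orthonormal ℝ v)
    {T : E →ₗ[ℝ] E} {μ : ι → ℝ} (hT : ∀ i, T (v i) = μ i • v i) {c : ℝ} (hc : ∀ i, c ≤ μ i)
    {w : E} (hw : w ∈ span ℝ (Set.range v)) :
    c * ⟪w, w⟫ ≤ ⟪w, T w⟫ := by
  have := hv.inner_map_self_le_of_mem_span (T := -T) (μ := -μ) (c := -c)
    (fun i => by simp [hT, neg_smul]) (fun i => neg_le_neg (hc i)) hw
  simpa [inner_neg_right] using this

lemma Submodule.exists_mem_inf_ne_zero_of_finrank_lt_add {K V : Type*} [DivisionRing K]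
    [AddCommGroup V] [Module K V] [FiniteDimensional K V] (U W : Submodule K V)
    (h : finrank K V < finrank K U + finrank K W) : ∃ x ∈ U ⊓ W, x ≠ 0 := by
  rw [← Submodule.ne_bot_iff]
  intro hbot
  have := Submodule.finrank_sup_add_finrank_inf_eq U W
  rw [hbot, finrank_bot] at this
  have := (U ⊔ W).finrank_le
  omega

lemma Finset.card_filter_eq_of_map_eq {α ι κ : Type*} [Fintype ι] [Fintype κ] {f : ι → α}
    {g : κ → α} (h : univ.val.map f = univ.val.map g) (p : α → Prop) [DecidablePred p] :
    #{i | p (f i)} = #{j | p (g j)} := by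
  have := congrArg (Multiset.countP p) h
  rwa [Multiset.countP_map, Multiset.countP_map] at this

lemma Antitone.card_sub_le_card_filter_le {α : Type*} [LinearOrder α] {k : ℕ} {x : Fin k → α}
    (hx : Antitone x) (i : Fin k) : k - i ≤ #{j | x j ≤ x i} :=
  calc k - i = #(Ici i) := (Fin.card_Ici i).symm
    _ ≤ _ := card_le_card fun j hj => by simpa using hx (mem_Ici.mp hj)

lemma Antitone.succ_le_card_filter_ge {α : Type*} [LinearOrder α] {k : ℕ} {x : Fin k → α}
    (hx : Antitone x) (i : Fin k) : i + 1 ≤ #{j | x i ≤ x j} :=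
  calc i + 1 = #(Iic i) := (Fin.card_Iic i).symm
    _ ≤ _ := card_le_card fun j hj => by simpa using hx (mem_Iic.mp hj)

namespace Function.Injective

variable {m n : Type*} [Fintype n] {e : m → n}

lemma extend_zero_dotProduct [Fintype m] {R : Type*} [CommSemiring R] (he : Injective e)
    (a : m → R) (w : n → R) : extend e a 0 ⬝ᵥ w = a ⬝ᵥ (w ∘ e) := by
  refine (Fintype.sum_of_injective e he _ _ (fun j hj => ?_) fun i => ?_).symm
  · rw [extend_apply' _ _ _ hj, Pi.zero_apply, zero_mul]
  · rw [he.extend_apply, comp_apply]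

lemma extend_zero_dotProduct_mulVec [Fintype m] {R : Type*} [CommSemiring R] (he : Injective e)
    (A : Matrix n n R) (a : m → R) :
    extend e a 0 ⬝ᵥ (A *ᵥ extend e a 0) = a ⬝ᵥ (A.submatrix e e *ᵥ a) := by
  rw [he.extend_zero_dotProduct]
  congr 1
  ext i
  rw [comp_apply, Matrix.mulVec, dotProduct_comm, he.extend_zero_dotProduct, Matrix.mulVec,
    dotProduct_comm]
  rfl

lemma exists_ne_zero_extend_zero_mem {K : Type*} [Field K] (he : Injective e)
    (U : Submodule K (n → K)) (V : Submodule K (m → K))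
    (h : Fintype.card n < finrank K U + finrank K V) :
    ∃ v ∈ V, v ≠ 0 ∧ extend e v 0 ∈ U := by
  have hext : Injective (ExtendByZero.linearMap K e) := extend_injective he (0 : n → K)
  have hfinrank : finrank K (V.map (ExtendByZero.linearMap K e)) = finrank K V :=
    (equivMapOfInjective _ hext V).finrank_eq.symm
  obtain ⟨w, ⟨hwU, hwV⟩, hw0⟩ := exists_mem_inf_ne_zero_of_finrank_lt_add U
    (V.map (ExtendByZero.linearMap K e)) (by rwa [hfinrank, finrank_fintype_fun_eq_card])
  obtain ⟨v, hvV, rfl⟩ := mem_map.mp hwV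
  exact ⟨v, hvV, fun hv => hw0 (by simp [hv]), hwU⟩

end Function.Injective

namespace Matrix

variable {m n : Type*} [Fintype m] [Fintype n]

lemma le_of_dotProduct_mulVec_bounds {A : Matrix n n ℝ} {e : m → n} (he : Injective e)
    {U : Submodule ℝ (n → ℝ)} {V : Submodule ℝ (m → ℝ)}
    (hdim : Fintype.card n < finrank ℝ U + finrank ℝ V) {a b : ℝ}
    (hU : ∀ w ∈ U, w ⬝ᵥ (A *ᵥ w) ≤ a * (w ⬝ᵥ w))
    (hV : ∀ v ∈ V, b * (v ⬝ᵥ v) ≤ v ⬝ᵥ (A.submatrix e e *ᵥ v)) : b ≤ a := by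
  obtain ⟨v, hvV, hv0, hvU⟩ := he.exists_ne_zero_extend_zero_mem U V hdim
  have hvA := hU _ hvU
  rw [he.extend_zero_dotProduct_mulVec, he.extend_zero_dotProduct, extend_comp he] at hvA
  have hv_pos : 0 < v ⬝ᵥ v := by simpa using dotProduct_self_star_pos_iff.mpr hv0
  exact le_of_mul_le_mul_right ((hV v hvV).trans hvA) hv_pos

namespace IsHermitian

variable [DecidableEq m] [DecidableEq n] {A : Matrix n n ℝ}

noncomputable def eigenvectorSpan (hA : A.IsHermitian) (s : Finset n) : Submodule ℝ (n → ℝ) :=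
  (span ℝ (Set.range fun i : s => hA.eigenvectorBasis i)).map
    (WithLp.linearEquiv 2 ℝ (n → ℝ)).toLinearMap

variable (hA : A.IsHermitian)

lemma finrank_eigenvectorSpan (s : Finset n) : finrank ℝ (hA.eigenvectorSpan s) = #s := by
  rw [eigenvectorSpan, LinearEquiv.finrank_map_eq, finrank_span_eq_card, Fintype.card_coe]
  exact (hA.eigenvectorBasis.orthonormal.comp _ Subtype.val_injective).linearIndependent

lemma toEuclideanLin_eigenvectorBasis (j : n) :
    toEuclideanLin A (hA.eigenvectorBasis j) = hA.eigenvalues j • hA.eigenvectorBasis j := by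
  ext i
  simp [hA.mulVec_eigenvectorBasis]

lemma dotProduct_mulVec_le_of_mem_eigenvectorSpan {s : Finset n} {c : ℝ}
    (hc : ∀ j ∈ s, hA.eigenvalues j ≤ c) {w : n → ℝ} (hw : w ∈ hA.eigenvectorSpan s) :
    w ⬝ᵥ (A *ᵥ w) ≤ c * (w ⬝ᵥ w) := by
  obtain ⟨w, hw', rfl⟩ := mem_map.mp hw
  have hv := hA.eigenvectorBasis.orthonormal.comp _ (Subtype.val_injective (p := (· ∈ s)))
  have := hv.inner_map_self_le_of_mem_span
    (fun j => hA.toEuclideanLin_eigenvectorBasis j) (fun j => hc j j.2) hw'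
  rw [EuclideanSpace.inner_eq_star_dotProduct, EuclideanSpace.inner_eq_star_dotProduct] at this
  simp only [star_trivial, toLpLin_apply] at this
  exact (dotProduct_comm _ _).trans_le this

lemma le_dotProduct_mulVec_of_mem_eigenvectorSpan {s : Finset n} {c : ℝ}
    (hc : ∀ j ∈ s, c ≤ hA.eigenvalues j) {w : n → ℝ} (hw : w ∈ hA.eigenvectorSpan s) :
    c * (w ⬝ᵥ w) ≤ w ⬝ᵥ (A *ᵥ w) := by
  obtain ⟨w, hw', rfl⟩ := mem_map.mp hw
  have hv := hA.eigenvectorBasis.orthonormal.comp _ (Subtype.val_injective (p := (· ∈ s)))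
  have := hv.le_inner_map_self_of_mem_span
    (fun j => hA.toEuclideanLin_eigenvectorBasis j) (fun j => hc j j.2) hw'
  rw [EuclideanSpace.inner_eq_star_dotProduct, EuclideanSpace.inner_eq_star_dotProduct] at this
  simp only [star_trivial, toLpLin_apply] at this
  exact this.trans_eq (dotProduct_comm _ _)

lemma map_eigenvalues_eq_of_roots {k : ℕ} {x : Fin k → ℝ}
    (hxA : A.charpoly.roots = univ.val.map x) : univ.val.map hA.eigenvalues = univ.val.map x := by
  simpa [hA.roots_charpoly_eq_eigenvalues] using hxA

lemma card_sub_le_card_eigenvalues_le {k : ℕ} {x : Fin k → ℝ} (hx : Antitone x)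
    (hxA : A.charpoly.roots = univ.val.map x) (j : Fin k) :
    k - j ≤ #{a | hA.eigenvalues a ≤ x j} := by
  rw [Finset.card_filter_eq_of_map_eq (hA.map_eigenvalues_eq_of_roots hxA) (· ≤ x j)]
  exact hx.card_sub_le_card_filter_le j

lemma succ_le_card_eigenvalues_ge {k : ℕ} {x : Fin k → ℝ} (hx : Antitone x)
    (hxA : A.charpoly.roots = univ.val.map x) (j : Fin k) :
    j + 1 ≤ #{a | x j ≤ hA.eigenvalues a} := by
  rw [Finset.card_filter_eq_of_map_eq (hA.map_eigenvalues_eq_of_roots hxA) (x j ≤ ·)]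
  exact hx.succ_le_card_filter_ge j

end IsHermitian

variable [DecidableEq m] [DecidableEq n] {A : Matrix n n ℝ} {k l : ℕ} {x : Fin k → ℝ}
  {y : Fin l → ℝ}

lemma IsHermitian.card_eq_of_roots (hA : A.IsHermitian)
    (hxA : A.charpoly.roots = univ.val.map x) : Fintype.card n = k := by
  simpa using congrArg Multiset.card (hA.map_eigenvalues_eq_of_roots hxA)

theorem IsHermitian.eigenvalues_submatrix_le (hA : A.IsHermitian) {e : m → n} (he : Injective e)
    (hx : Antitone x) (hy : Antitone y) (hxA : A.charpoly.roots = univ.val.map x)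
    (hyA : (A.submatrix e e).charpoly.roots = univ.val.map y) {i : Fin l} {j : Fin k}
    (hji : (j : ℕ) ≤ i) : y i ≤ x j := by
  have hB := hA.submatrix e
  have hU := hA.card_sub_le_card_eigenvalues_le hx hxA j
  have hV := hB.succ_le_card_eigenvalues_ge hy hyA i
  rw [← hA.finrank_eigenvectorSpan] at hU
  rw [← hB.finrank_eigenvectorSpan] at hV
  have := hA.card_eq_of_roots hxA
  refine le_of_dotProduct_mulVec_bounds he (U := hA.eigenvectorSpan {a | hA.eigenvalues a ≤ x j})
    (V := hB.eigenvectorSpan {b | y i ≤ hB.eigenvalues b}) ?_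
    (fun w hw => hA.dotProduct_mulVec_le_of_mem_eigenvectorSpan (by simp) hw)
    (fun v hv => hB.le_dotProduct_mulVec_of_mem_eigenvectorSpan (by simp) hv)
  omega

theorem IsHermitian.le_eigenvalues_submatrix (hA : A.IsHermitian) {e : m → n} (he : Injective e)
    (hx : Antitone x) (hy : Antitone y) (hxA : A.charpoly.roots = univ.val.map x)
    (hyA : (A.submatrix e e).charpoly.roots = univ.val.map y) {i : Fin l} {j : Fin k}
    (hij : i + (Fintype.card n - Fintype.card m) ≤ (j : ℕ)) : x j ≤ y i := by
  have hB := hA.submatrix e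
  have hU := hA.succ_le_card_eigenvalues_ge hx hxA j
  have hV := hB.card_sub_le_card_eigenvalues_le hy hyA i
  rw [← hA.finrank_eigenvectorSpan] at hU
  rw [← hB.finrank_eigenvectorSpan] at hV
  have := hA.card_eq_of_roots hxA
  have := hB.card_eq_of_roots hyA
  have := Fintype.card_le_of_injective e he
  refine neg_le_neg_iff.mp <| le_of_dotProduct_mulVec_bounds (A := -A) he
    (U := hA.eigenvectorSpan {a | x j ≤ hA.eigenvalues a})
    (V := hB.eigenvectorSpan {b | hB.eigenvalues b ≤ y i}) ?_
    (fun w hw => ?_) (fun v hv => ?_)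
  · omega
  · rw [neg_mulVec, dotProduct_neg, neg_mul, neg_le_neg_iff]
    exact hA.le_dotProduct_mulVec_of_mem_eigenvectorSpan (by simp) hw
  · rw [submatrix_neg, Pi.neg_apply, Pi.neg_apply, neg_mulVec, dotProduct_neg, neg_mul,
      neg_le_neg_iff]
    exact hB.dotProduct_mulVec_le_of_mem_eigenvectorSpan (by simp) hv

end Matrix

/-- **Cauchy interlacing theorem.** The eigenvalues of a real symmetric `N × N` matrix `S`
(listed in decreasing order with multiplicity, as the roots of its characteristic polynomial)
and the eigenvalues of its principal `(N-1) × (N-1)` submatrix obtained by deleting the last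
row and column interlace: `x i ≥ y i ≥ x (i+1)` for all `1 ≤ i ≤ N-1`. -/
theorem cauchy_interlacing
    (N : ℕ)
    (S : Matrix (Fin N) (Fin N) ℝ) (hS : S.IsSymm)
    (x : Fin N → ℝ) (y : Fin (N - 1) → ℝ)
    (hxdec : Antitone x) (hydec : Antitone y)
    (hx : S.charpoly.roots = (Finset.univ.val.map x))
    (hy : ((S.submatrix (fun i : Fin (N - 1) => Fin.castLE (Nat.sub_le N 1) i)
        (fun j : Fin (N - 1) => Fin.castLE (Nat.sub_le N 1) j)).charpoly).roots
        = (Finset.univ.val.map y)) :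
    ∀ i : Fin (N - 1),
      x (Fin.castLE (Nat.sub_le N 1) i) ≥ y i ∧
      y i ≥ x ⟨i + 1, by omega⟩ := by
  have hSH : S.IsHermitian := isHermitian_iff_isSymm.mpr hS
  have he : Injective (Fin.castLE (Nat.sub_le N 1)) := Fin.castLE_injective _
  intro i
  refine ⟨hSH.eigenvalues_submatrix_le he hxdec hydec hx hy le_rfl,
    hSH.le_eigenvalues_submatrix he hxdec hydec hx hy ?_⟩
  simp only [Fintype.card_fin]
  omega
end

section
/- With d_r and e_r as the weighted Dyck path counts (weights α on down-steps from odd height for d, and β for e, respectively), one has β·d_r = α·e_r for all r ≥ 1, and hence the recursion d_r = β Σ_{j=2}^r d_{r−j} d_{j−1} + α d_{r−1}. -/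
/-- The height of the lattice path with `±1` steps `f` after the first `i` steps
(`true` = up-step, `false` = down-step). -/
def pathHeight (r : ℕ) (f : Fin r → Bool) (i : ℕ) : ℤ :=
  ∑ j ∈ Finset.univ.filter (fun j : Fin r => (j : ℕ) < i),
    (if f j then (1 : ℤ) else -1)

/-- A Dyck path of length `2k`, encoded by its step sequence. -/
def IsDyckPath (k : ℕ) (f : Fin (2 * k) → Bool) : Prop :=
  pathHeight (2 * k) f (2 * k) = 0 ∧ ∀ i : Fin (2 * k + 1), 0 ≤ pathHeight (2 * k) f i

instance (k : ℕ) : DecidablePred (IsDyckPath k) := fun f => by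
  unfold IsDyckPath; infer_instance

/-- `a(D)`: the number of down-steps of the Dyck path `D` starting from an odd height. -/
def aCount (k : ℕ) (f : Fin (2 * k) → Bool) : ℕ :=
  (Finset.univ.filter
    (fun j : Fin (2 * k) => f j = false ∧ Odd (pathHeight (2 * k) f (j : ℕ)))).card

/-- `d_r(α,β) = Σ_D β^{b(D)} α^{a(D)}`, summed over Dyck paths `D` of length `2r`,
where `b(D) = r − a(D)`. -/
def dWeight {R : Type*} [CommRing R] (α β : R) (r : ℕ) : R :=
  ∑ f ∈ Finset.univ.filter (IsDyckPath r),
    β ^ (r - aCount r f) * α ^ (aCount r f)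

/-- `e_r(α,β) = Σ_D β^{a(D)} α^{b(D)}`, summed over Dyck paths `D` of length `2r`. -/
def eWeight {R : Type*} [CommRing R] (α β : R) (r : ℕ) : R :=
  ∑ f ∈ Finset.univ.filter (IsDyckPath r),
    β ^ (aCount r f) * α ^ (r - aCount r f)

/-!
Cut a nonempty Dyck path at its first return to the axis: it is `U A D B` with Dyck paths
`A`, `B`. The height before a step has the parity of its position, so the weight of a
down-step only depends on the parity of its index. The return step has odd index, the steps
of `A` are shifted by one and those of `B` by an even amount; hence `α` and `β` swap on `A`,
and `d_{n+1}(α,β) = α Σ_{i+j=n} d_i(β,α) d_j(α,β)`. As `e_r(α,β) = d_r(β,α)`, reading this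
sum backwards gives `β d_{n+1} = α e_{n+1}`; substituting `α d_i(β,α) = β d_i(α,β)` for
`i ≥ 1` back into the recursion gives the second identity.
Paths are transported to Mathlib's `DyckWord`, whose first-return decomposition comes from
its bijection with binary trees.
-/
open DyckStep Finset

namespace DyckWord

variable {M : Type*}

/-- `x` weighs the down-steps at odd positions of the word and `y` those at even positions. -/
def downStepWeight [Mul M] [One M] (x y : M) : List DyckStep → M
  | [] => 1
  | U :: l => downStepWeight y x l
  | D :: l => y * downStepWeight y x l

theorem downStepWeight_append [CommMonoid M] (x y : M) (l m : List DyckStep) :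
    downStepWeight x y (l ++ m) =
      downStepWeight x y l *
        if Even l.length then downStepWeight x y m else downStepWeight y x m := by
  induction l generalizing x y with
  | nil => simp [downStepWeight]
  | cons s l ih =>
    cases s <;> simp only [List.cons_append, downStepWeight, ih, List.length_cons,
      Nat.even_add_one] <;> split_ifs <;> simp [mul_assoc]

theorem downStepWeight_nest_add [CommMonoid M] (x y : M) (p q : DyckWord) :
    downStepWeight x y (p.nest + q : DyckWord) =
      x * downStepWeight y x p * downStepWeight x y q := by
  have hp : Even (p : List DyckStep).length :=
    ⟨p.semilength, by rw [← two_mul_semilength_eq_length]; ring⟩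
  have hsteps : ((p.nest + q : DyckWord) : List DyckStep) = U :: (p ++ D :: q) := by
    change U :: ((p : List DyckStep) ++ [D]) ++ q = _
    simp
  rw [hsteps, downStepWeight, downStepWeight_append, if_pos hp, downStepWeight,
    mul_left_comm, mul_assoc]

theorem length_eq_of_semilength_eq {p : DyckWord} {r : ℕ} (h : p.semilength = r) :
    p.toList.length = 2 * r := by
  rw [← two_mul_semilength_eq_length, h]

variable [AddCommMonoid M]

theorem sum_semilength_eq_sum_treesOfNumNodesEq (F : DyckWord → M) (n : ℕ) :
    ∑ p : {p : DyckWord // p.semilength = n}, F p =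
      ∑ t ∈ BinaryTree.treesOfNumNodesEq n, F (ofTree t) := by
  rw [← sum_coe_sort (BinaryTree.treesOfNumNodesEq n)]
  exact Fintype.sum_equiv (equivTreesOfNumNodesEq n) _ _ fun p => by simp [ofTree_toTree]

theorem sum_semilength_succ (F : DyckWord → M) (n : ℕ) :
    ∑ p : {p : DyckWord // p.semilength = n + 1}, F p =
      ∑ ij ∈ antidiagonal n, ∑ p : {p : DyckWord // p.semilength = ij.1},
        ∑ q : {q : DyckWord // q.semilength = ij.2}, F (p.1.nest + q) := by
  rw [sum_semilength_eq_sum_treesOfNumNodesEq, BinaryTree.treesOfNumNodesEq_succ, sum_biUnion]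
  · refine sum_congr rfl fun ij _ => ?_
    rw [sum_semilength_eq_sum_treesOfNumNodesEq
        (fun p => ∑ q : {q : DyckWord // q.semilength = ij.2}, F (p.nest + q)),
      sum_map, sum_product]
    refine sum_congr rfl fun s _ => ?_
    rw [sum_semilength_eq_sum_treesOfNumNodesEq (fun q => F ((ofTree s).nest + q))]
    rfl
  · simp_rw [Set.PairwiseDisjoint, Set.Pairwise, disjoint_left]
    aesop

end DyckWord

theorem DyckStep.count_U_add_count_D (l : List DyckStep) : l.count U + l.count D = l.length := by
  induction l with
  | nil => rfl
  | cons s l ih => cases s <;> simp <;> omega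

def toDyckSteps {n : ℕ} (f : Fin n → Bool) : List DyckStep :=
  List.ofFn fun i => if f i then U else D

@[simp]
theorem length_toDyckSteps {n : ℕ} (f : Fin n → Bool) : (toDyckSteps f).length = n :=
  List.length_ofFn

theorem toDyckSteps_succ {n : ℕ} (f : Fin (n + 1) → Bool) :
    toDyckSteps f = (if f 0 then U else D) :: toDyckSteps fun j => f j.succ :=
  List.ofFn_succ

theorem toDyckSteps_decide_getElem_eq_U {n : ℕ} (l : List DyckStep) (h : l.length = n) :
    toDyckSteps (fun i : Fin n => decide (l[i.1]'(h ▸ i.2) = U)) = l := by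
  refine List.ext_getElem (by simp [h]) fun k _ _ => ?_
  simp only [toDyckSteps, List.getElem_ofFn]
  rcases l[k].dichotomy with hk | hk <;> simp [hk]

theorem count_D_toDyckSteps {n : ℕ} (f : Fin n → Bool) :
    (toDyckSteps f).count D = #{j | f j = false} := by
  induction n with
  | zero => simp [toDyckSteps]
  | succ n ih =>
    rw [toDyckSteps_succ, card_filter, Fin.sum_univ_succ, ← card_filter, ← ih]
    cases f 0 <;> simp [add_comm]

theorem pathHeight_zero (n : ℕ) (f : Fin n → Bool) : pathHeight n f 0 = 0 := by
  simp [pathHeight]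

theorem pathHeight_succ_succ (n : ℕ) (f : Fin (n + 1) → Bool) (i : ℕ) :
    pathHeight (n + 1) f (i + 1) =
      (if f 0 then 1 else -1) + pathHeight n (fun j => f j.succ) i := by
  simp [pathHeight, sum_filter, Fin.sum_univ_succ]

theorem pathHeight_eq_count_sub_count (n : ℕ) (f : Fin n → Bool) (i : ℕ) :
    pathHeight n f i = ((toDyckSteps f).take i).count U - ((toDyckSteps f).take i).count D := by
  induction n generalizing i with
  | zero => simp [pathHeight, toDyckSteps]
  | succ n ih =>
    cases i with
    | zero => simp [pathHeight_zero]
    | succ i =>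
      rw [pathHeight_succ_succ, ih, toDyckSteps_succ, List.take_succ_cons]
      cases f 0 <;> simp <;> ring

theorem odd_pathHeight_iff {n : ℕ} (f : Fin n → Bool) {i : ℕ} (hi : i ≤ n) :
    Odd (pathHeight n f i) ↔ Odd i := by
  have hlen := DyckStep.count_U_add_count_D ((toDyckSteps f).take i)
  rw [List.length_take, length_toDyckSteps, min_eq_left hi] at hlen
  rw [pathHeight_eq_count_sub_count, Int.odd_iff, Nat.odd_iff]
  omega

theorem isDyckPath_iff (r : ℕ) (f : Fin (2 * r) → Bool) :
    IsDyckPath r f ↔ (toDyckSteps f).count U = (toDyckSteps f).count D ∧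
      ∀ i, ((toDyckSteps f).take i).count D ≤ ((toDyckSteps f).take i).count U := by
  have htake : ∀ i, 2 * r ≤ i → (toDyckSteps f).take i = toDyckSteps f := fun i hi =>
    List.take_of_length_le (by simpa using hi)
  simp only [IsDyckPath, pathHeight_eq_count_sub_count, htake _ le_rfl, sub_eq_zero, Nat.cast_inj,
    sub_nonneg, Nat.cast_le]
  refine and_congr_right fun _ => ⟨fun h i => ?_, fun h i => h i⟩
  rcases le_or_gt i (2 * r) with hi | hi
  · exact h ⟨i, Nat.lt_succ_of_le hi⟩
  · rw [htake i hi.le, ← htake (2 * r) le_rfl]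
    exact h (Fin.last _)

theorem count_D_toDyckSteps_of_isDyckPath {r : ℕ} {f : Fin (2 * r) → Bool}
    (hf : IsDyckPath r f) : (toDyckSteps f).count D = r := by
  have hlen := DyckStep.count_U_add_count_D (toDyckSteps f)
  have hUD := ((isDyckPath_iff r f).1 hf).1
  rw [length_toDyckSteps] at hlen
  omega

def dyckPathEquiv (r : ℕ) :
    {f : Fin (2 * r) → Bool // IsDyckPath r f} ≃ {p : DyckWord // p.semilength = r} where
  toFun f :=
    ⟨⟨toDyckSteps f.1, ((isDyckPath_iff r f.1).1 f.2).1, ((isDyckPath_iff r f.1).1 f.2).2⟩, by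
      rw [DyckWord.semilength_eq_count_D]
      exact count_D_toDyckSteps_of_isDyckPath f.2⟩
  invFun p :=
    ⟨fun i => decide (p.1.toList[i.1]'(by
        rw [DyckWord.length_eq_of_semilength_eq p.2]; exact i.2) = U), by
      rw [isDyckPath_iff,
        toDyckSteps_decide_getElem_eq_U _ (DyckWord.length_eq_of_semilength_eq p.2)]
      exact ⟨p.1.count_U_eq_count_D, p.1.count_D_le_count_U⟩⟩
  left_inv f := by
    ext i
    simp [toDyckSteps]
  right_inv p := Subtype.ext <| DyckWord.ext <|
    toDyckSteps_decide_getElem_eq_U _ (DyckWord.length_eq_of_semilength_eq p.2)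

theorem downStepWeight_toDyckSteps {M : Type*} [CommMonoid M] (x y : M) {n : ℕ}
    (f : Fin n → Bool) :
    DyckWord.downStepWeight x y (toDyckSteps f) =
      ∏ j, if f j then 1 else if Even (j : ℕ) then y else x := by
  induction n generalizing x y with
  | zero => simp [toDyckSteps, DyckWord.downStepWeight]
  | succ n ih =>
    rw [toDyckSteps_succ, Fin.prod_univ_succ]
    cases f 0 <;> simp [DyckWord.downStepWeight, ih, Fin.val_succ, Nat.even_add_one] <;>
      simp_rw [← Nat.not_even_iff_odd, ite_not]

theorem pow_mul_pow_aCount_eq_downStepWeight {M : Type*} [CommMonoid M] (α β : M) {r : ℕ}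
    {f : Fin (2 * r) → Bool} (hf : IsDyckPath r f) :
    β ^ (r - aCount r f) * α ^ aCount r f = DyckWord.downStepWeight α β (toDyckSteps f) := by
  have hodd : aCount r f = #{j | f j = false ∧ ¬Even (j : ℕ)} := by
    refine congrArg card (filter_congr fun j _ => ?_)
    rw [odd_pathHeight_iff f j.2.le, Nat.not_even_iff_odd]
  have hdown :
      #{j | f j = false ∧ Even (j : ℕ)} + #{j | f j = false ∧ ¬Even (j : ℕ)} = r := by
    rw [← filter_filter, ← filter_filter, card_filter_add_card_filter_not, ← count_D_toDyckSteps,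
      count_D_toDyckSteps_of_isDyckPath hf]
  rw [downStepWeight_toDyckSteps, prod_ite, prod_const_one, one_mul, prod_ite, prod_const,
    prod_const, filter_filter, filter_filter]
  simp only [Bool.not_eq_true]
  rw [hodd, show r - #{j | f j = false ∧ ¬Even (j : ℕ)} = #{j | f j = false ∧ Even (j : ℕ)} by
    omega]

section Weights

variable {R : Type*} [CommRing R] (α β : R)

theorem dWeight_eq_sum_downStepWeight (r : ℕ) :
    dWeight α β r =
      ∑ p : {p : DyckWord // p.semilength = r}, DyckWord.downStepWeight α β p.1 := by
  rw [dWeight, sum_subtype (p := IsDyckPath r) _ (fun f => by simp)]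
  exact Fintype.sum_equiv (dyckPathEquiv r) _ _ fun f =>
    pow_mul_pow_aCount_eq_downStepWeight α β f.2

theorem eWeight_eq_dWeight_swap (r : ℕ) : eWeight α β r = dWeight β α r :=
  sum_congr rfl fun _ _ => mul_comm _ _

theorem dWeight_zero : dWeight α β 0 = 1 := by
  rw [dWeight_eq_sum_downStepWeight, DyckWord.sum_semilength_eq_sum_treesOfNumNodesEq
    (fun p => DyckWord.downStepWeight α β p), BinaryTree.treesOfNumNodesEq_zero, sum_singleton]
  rfl

theorem dWeight_succ (n : ℕ) :
    dWeight α β (n + 1) = α * ∑ ij ∈ antidiagonal n, dWeight β α ij.1 * dWeight α β ij.2 := by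
  simp_rw [dWeight_eq_sum_downStepWeight]
  rw [DyckWord.sum_semilength_succ (fun p => DyckWord.downStepWeight α β p)]
  simp_rw [DyckWord.downStepWeight_nest_add, sum_mul_sum, mul_sum, mul_assoc]

theorem beta_mul_dWeight_succ (n : ℕ) :
    β * dWeight α β (n + 1) = α * eWeight α β (n + 1) := by
  rw [eWeight_eq_dWeight_swap, dWeight_succ, dWeight_succ, mul_left_comm,
    ← Nat.sum_antidiagonal_swap]
  simp_rw [Prod.fst_swap, Prod.snd_swap, mul_comm (dWeight α β _)]

theorem dWeight_succ_eq_sum_Icc (n : ℕ) :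
    dWeight α β (n + 1) =
      β * (∑ j ∈ Icc 2 (n + 1), dWeight α β (n + 1 - j) * dWeight α β (j - 1)) +
        α * dWeight α β n := by
  have hswap (k : ℕ) : α * dWeight β α (k + 1) = β * dWeight α β (k + 1) := by
    rw [← eWeight_eq_dWeight_swap, beta_mul_dWeight_succ]
  rw [dWeight_succ, Nat.sum_antidiagonal_eq_sum_range_succ_mk, sum_range_succ', dWeight_zero,
    mul_add, ← Ico_add_one_right_eq_Icc, sum_Ico_eq_sum_range, mul_sum, mul_sum]
  congr 1
  · refine sum_congr (by congr 1) fun k _ => ?_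
    rw [← mul_assoc, hswap, show n + 1 - (2 + k) = n - (k + 1) by omega,
      show 2 + k - 1 = k + 1 by omega]
    ring
  · simp

end Weights

open MvPolynomial in
/-- With `α, β` formal variables over `ℚ`, and `d_r`, `e_r` the weighted Dyck-path counts,
one has `β·d_r = α·e_r` for all `r ≥ 1`, and hence the recursion
`d_r = β Σ_{j=2}^r d_{r−j} d_{j−1} + α d_{r−1}`. -/
theorem beta_dWeight_eq_alpha_eWeight (r : ℕ) (hr : 1 ≤ r) :
    letI α : MvPolynomial Bool ℚ := MvPolynomial.X true
    letI β : MvPolynomial Bool ℚ := MvPolynomial.X false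
    β * dWeight α β r = α * eWeight α β r ∧
    dWeight α β r
      = β * (∑ j ∈ Finset.Icc 2 r, dWeight α β (r - j) * dWeight α β (j - 1))
        + α * dWeight α β (r - 1) := by
  obtain ⟨n, rfl⟩ := Nat.exists_eq_add_of_le' hr
  exact ⟨beta_mul_dWeight_succ _ _ n, dWeight_succ_eq_sum_Icc _ _ n⟩
end

section
/- Fix α ≥ 1 and let ν_α be the measure on [(√α−1)², (√α+1)²] with density (x + α − 1)/(2πx·√(4α − (x − (α+1))²)). Then the moment generating function satisfies 1 + Σ_{k≥1} (∫ x^k dν_α) z^k = (1/2)(1 + ((α−1)z + 1)/√((α−1)²z² − 2(α+1)z + 1)) as an identity of formal power series (convergent for small |z|). -/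
/-!
Substituting `x = α + 1 + 2√α cos θ` (`θ ∈ (0, π)`) turns `ν_α` into
`(x + α - 1)/x · dθ/(2π)`, so `m (k + 1) = (2π)⁻¹ ∫₀^π x^k (x + α - 1) dθ`.
For `|z| < (√α + 1)⁻²` the geometric series in `z x(θ)` is dominated uniformly in `θ`, hence
`∑ m (k + 1) z^(k + 1) = (2π)⁻¹ ∫₀^π z (x + α - 1)/(1 - z x) dθ
  = -1/2 + ((α - 1) z + 1)/(2π) ∫₀^π dθ/(A - B cos θ)`
with `A = 1 - (α + 1) z`, `B = 2√α z`. The classical integral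
`∫₀^π dθ/(A - B cos θ) = π/√(A² - B²)` for `|B| < A` (antiderivative
`arccos ((A cos θ - B)/(A - B cos θ)) / √(A² - B²)`) and
`A² - B² = (α - 1)² z² - 2(α + 1) z + 1` finish the computation.
-/

open Real MeasureTheory Set intervalIntegral

theorem integral_div_sqrt_sq_sub_sq_eq_integral_cos {c r : ℝ} (hr : 0 < r) (f : ℝ → ℝ) :
    ∫ x in (c - r)..(c + r), f x / √(r ^ 2 - (x - c) ^ 2) =
      ∫ θ in 0..π, f (c + r * cos θ) := by
  have himage : (fun θ => c + r * cos θ) '' Icc 0 π = Icc (c - r) (c + r) := by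
    have : (fun θ => c + r * cos θ) = (r * · + c) ∘ cos := by ext; simp [add_comm]
    rw [this, image_comp, bijOn_cos.image_eq, image_affine_Icc' hr]
    ring_nf
  have hderiv : ∀ θ ∈ Icc 0 π,
      HasDerivWithinAt (fun θ => c + r * cos θ) (-(r * sin θ)) (Icc 0 π) θ := fun θ _ => by
    simpa using (((hasDerivAt_cos θ).const_mul r).const_add c).hasDerivWithinAt
  have hinj : InjOn (fun θ => c + r * cos θ) (Icc 0 π) := fun a ha b hb h =>
    injOn_cos ha hb (by simpa [hr.ne'] using h)
  rw [integral_of_le (by linarith), integral_of_le pi_pos.le, ← integral_Icc_eq_integral_Ioc,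
    ← integral_Icc_eq_integral_Ioc, ← himage,
    integral_image_eq_integral_abs_deriv_smul measurableSet_Icc hderiv hinj,
    integral_Icc_eq_integral_Ioo, integral_Icc_eq_integral_Ioo]
  refine setIntegral_congr_fun measurableSet_Ioo fun θ hθ => ?_
  have hsin : 0 < sin θ := sin_pos_of_pos_of_lt_pi hθ.1 hθ.2
  have hsq : r ^ 2 - (c + r * cos θ - c) ^ 2 = (r * sin θ) ^ 2 := by
    linear_combination -r ^ 2 * sin_sq_add_cos_sq θ
  simp only [hsq, sqrt_sq (by positivity : 0 ≤ r * sin θ), smul_eq_mul, abs_neg,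
    abs_of_pos (by positivity : 0 < r * sin θ)]
  field_simp

theorem sub_mul_cos_pos {A B : ℝ} (h : |B| < A) (θ : ℝ) : 0 < A - B * cos θ := by
  have : B * cos θ ≤ |B| := by
    calc B * cos θ ≤ |B * cos θ| := le_abs_self _
      _ ≤ |B| := by rw [abs_mul]; exact mul_le_of_le_one_right (abs_nonneg B) (abs_cos_le_one θ)
  linarith

theorem hasSum_intervalIntegral_mul_pow {a b q : ℝ} {g h : ℝ → ℝ} (hg : Continuous g)
    (hh : Continuous h) (hq₀ : 0 ≤ q) (hq₁ : q < 1) (hgq : ∀ t ∈ uIoc a b, |g t| ≤ q) :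
    HasSum (fun n => ∫ t in a..b, h t * g t ^ n) (∫ t in a..b, h t * (1 - g t)⁻¹) := by
  refine hasSum_integral_of_dominated_convergence (fun n t => |h t| * q ^ n)
    (fun n => (by fun_prop : Continuous _).aestronglyMeasurable)
    (fun n => ae_of_all _ fun t ht => ?_)
    (ae_of_all _ fun _ _ => (summable_geometric_of_lt_one hq₀ hq₁).mul_left _) ?_
    (ae_of_all _ fun t ht => ?_)
  · rw [norm_mul, norm_pow, Real.norm_eq_abs, Real.norm_eq_abs]
    gcongr
    exact hgq t ht
  · simp_rw [tsum_mul_left, tsum_geometric_of_lt_one hq₀ hq₁]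
    exact (hh.abs.mul continuous_const).intervalIntegrable _ _
  · exact (hasSum_geometric_of_abs_lt_one ((hgq t ht).trans_lt hq₁)).mul_left (h t)

theorem hasDerivAt_arccos_div_sub_mul_cos {A B θ : ℝ} (h : |B| < A) (hθ : θ ∈ Ioo 0 π) :
    HasDerivAt (fun θ => arccos ((A * cos θ - B) / (A - B * cos θ)))
      (√(A ^ 2 - B ^ 2) / (A - B * cos θ)) θ := by
  have hden := sub_mul_cos_pos h θ
  have hsin : 0 < sin θ := sin_pos_of_pos_of_lt_pi hθ.1 hθ.2
  have hAB : 0 < A ^ 2 - B ^ 2 := by nlinarith [abs_nonneg B, sq_abs B]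
  set u := (A * cos θ - B) / (A - B * cos θ) with hu_def
  have hu : 1 - u ^ 2 = (√(A ^ 2 - B ^ 2) * sin θ / (A - B * cos θ)) ^ 2 := by
    have := hden.ne'
    rw [hu_def, div_pow, div_pow, mul_pow, sq_sqrt hAB.le, one_sub_div (pow_ne_zero 2 this),
      div_left_inj' (pow_ne_zero 2 this)]
    linear_combination (B ^ 2 - A ^ 2) * sin_sq_add_cos_sq θ
  have hu1 : 0 < 1 - u ^ 2 := by rw [hu]; positivity
  have harccos : HasDerivAt arccos (-(1 / √(1 - u ^ 2))) u :=
    hasDerivAt_arccos (by nlinarith) (by nlinarith)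
  have hquot : HasDerivAt (fun θ => (A * cos θ - B) / (A - B * cos θ))
      (-(sin θ * (A ^ 2 - B ^ 2)) / (A - B * cos θ) ^ 2) θ := by
    have hnum : HasDerivAt (fun θ => A * cos θ - B) (-(A * sin θ)) θ := by
      simpa using ((hasDerivAt_cos θ).const_mul A).sub_const B
    have hden' : HasDerivAt (fun θ => A - B * cos θ) (B * sin θ) θ := by
      simpa using ((hasDerivAt_cos θ).const_mul B).const_sub A
    exact (hnum.div hden' hden.ne').congr_deriv (by ring)
  refine (harccos.comp θ hquot).congr_deriv ?_
  rw [hu, sqrt_sq (by positivity)]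
  field_simp
  rw [sq_sqrt hAB.le]

theorem integral_inv_sub_mul_cos {A B : ℝ} (h : |B| < A) :
    ∫ θ in 0..π, (A - B * cos θ)⁻¹ = π / √(A ^ 2 - B ^ 2) := by
  have hD : 0 < √(A ^ 2 - B ^ 2) := sqrt_pos.2 (by nlinarith [abs_nonneg B, sq_abs B])
  have hcont : Continuous fun θ => arccos ((A * cos θ - B) / (A - B * cos θ)) :=
    continuous_arccos.comp <|
      Continuous.div (by fun_prop) (by fun_prop) fun θ => (sub_mul_cos_pos h θ).ne'
  have hFTC : ∫ θ in 0..π, √(A ^ 2 - B ^ 2) / (A - B * cos θ) = π := by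
    rw [integral_eq_sub_of_hasDeriv_right_of_le pi_pos.le hcont.continuousOn
      (fun θ hθ => (hasDerivAt_arccos_div_sub_mul_cos h hθ).hasDerivWithinAt)
      ((continuous_const.div (by fun_prop) fun θ =>
        (sub_mul_cos_pos h θ).ne').intervalIntegrable _ _)]
    have h0 : (A * cos 0 - B) / (A - B * cos 0) = 1 := by
      rw [cos_zero, mul_one, mul_one, div_self]
      linarith [le_abs_self B]
    have hπ : (A * cos π - B) / (A - B * cos π) = -1 := by
      rw [cos_pi, div_eq_iff (by linarith [neg_abs_le B])]
      ring
    rw [h0, hπ, arccos_neg_one, arccos_one, sub_zero]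
  rw [eq_div_iff hD.ne', mul_comm]
  simpa only [div_eq_mul_inv, intervalIntegral.integral_const_mul] using hFTC

theorem wishart_moment_succ_eq_integral_cos {α : ℝ} (hα : 0 < α) (k : ℕ) :
    ∫ x in ((α + 1) - 2 * √α)..((α + 1) + 2 * √α),
      x ^ (k + 1) * ((x + α - 1) / (2 * π * x * √(4 * α - (x - (α + 1)) ^ 2)))
    = ∫ θ in 0..π,
        (α + 1 + 2 * √α * cos θ) ^ k * (α + 1 + 2 * √α * cos θ + α - 1) / (2 * π) := by
  have h4 : (2 * √α) ^ 2 = 4 * α := by rw [mul_pow, sq_sqrt hα.le]; norm_num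
  rw [← integral_div_sqrt_sq_sub_sq_eq_integral_cos (by positivity : 0 < 2 * √α)
    (fun x => x ^ k * (x + α - 1) / (2 * π)), h4]
  refine integral_congr_uIoo fun x hx => ?_
  rw [uIoo_of_le (by linarith [sqrt_nonneg α])] at hx
  have hx0 : 0 < x := lt_of_le_of_lt (by nlinarith [sq_sqrt hα.le, sq_nonneg (√α - 1)]) hx.1
  field_simp
  ring

theorem integral_wishart_resolvent {α z : ℝ} (hα : 0 ≤ α)
    (hz : |2 * √α * z| < 1 - (α + 1) * z) :
    ∫ θ in 0..π, z * (α + 1 + 2 * √α * cos θ + α - 1) / (2 * π) *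
        (1 - z * (α + 1 + 2 * √α * cos θ))⁻¹
      = ((α - 1) * z + 1) / (2 * √((α - 1) ^ 2 * z ^ 2 - 2 * (α + 1) * z + 1)) - 1 / 2 := by
  have hden := sub_mul_cos_pos hz
  have hsplit : ∀ θ, z * (α + 1 + 2 * √α * cos θ + α - 1) / (2 * π) *
      (1 - z * (α + 1 + 2 * √α * cos θ))⁻¹
      = ((α - 1) * z + 1) / (2 * π) * (1 - (α + 1) * z - 2 * √α * z * cos θ)⁻¹
        - 1 / (2 * π) := by
    intro θ
    have hD := (hden θ).ne'
    rw [show z * (α + 1 + 2 * √α * cos θ + α - 1)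
        = ((α - 1) * z + 1) - (1 - (α + 1) * z - 2 * √α * z * cos θ) by ring,
      show 1 - z * (α + 1 + 2 * √α * cos θ)
        = 1 - (α + 1) * z - 2 * √α * z * cos θ by ring]
    generalize 1 - (α + 1) * z - 2 * √α * z * cos θ = D at hD ⊢
    field_simp
  have hdisc : (1 - (α + 1) * z) ^ 2 - (2 * √α * z) ^ 2
      = (α - 1) ^ 2 * z ^ 2 - 2 * (α + 1) * z + 1 := by
    linear_combination (-4 * z ^ 2) * sq_sqrt hα
  simp_rw [hsplit]
  rw [intervalIntegral.integral_sub, intervalIntegral.integral_const_mul,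
    integral_inv_sub_mul_cos hz, hdisc, intervalIntegral.integral_const, smul_eq_mul]
  · field_simp
    ring
  · exact (continuous_const.mul ((by fun_prop : Continuous _).inv₀ fun θ =>
      (hden θ).ne')).intervalIntegrable _ _
  · exact intervalIntegrable_const

open Real in
/-- For `α ≥ 1`, let `ν_α` be the measure on `[(√α−1)², (√α+1)²]` with density
`(x + α − 1)/(2πx·√(4α − (x − (α+1))²))`, with moments
`m_k = ∫ x^k dν_α`. Then, for `z` small enough,
`1 + Σ_{k≥1} m_k z^k = (1/2)(1 + ((α−1)z + 1)/√((α−1)²z² − 2(α+1)z + 1))`. -/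
theorem moment_generating_function_Wishart_shape
    (α : ℝ) (hα : 1 ≤ α)
    (m : ℕ → ℝ)
    (hm : ∀ k : ℕ, m k = ∫ x in ((α + 1) - 2 * Real.sqrt α)..((α + 1) + 2 * Real.sqrt α),
      x ^ k * ((x + α - 1) / (2 * Real.pi * x * Real.sqrt (4 * α - (x - (α + 1)) ^ 2)))) :
    ∃ ε > 0, ∀ z : ℝ, |z| < ε →
      Summable (fun k : ℕ => m (k + 1) * z ^ (k + 1)) ∧
      1 + ∑' k : ℕ, m (k + 1) * z ^ (k + 1)
        = (1 / 2) * (1 + ((α - 1) * z + 1)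
            / Real.sqrt ((α - 1) ^ 2 * z ^ 2 - 2 * (α + 1) * z + 1)) := by
  have hα₀ : 0 < α := by linarith
  have hs : √α ^ 2 = α := sq_sqrt hα₀.le
  have hg : ∀ θ, |α + 1 + 2 * √α * cos θ| ≤ (√α + 1) ^ 2 := fun θ => by
    rw [abs_le]
    constructor <;> nlinarith [neg_one_le_cos θ, cos_le_one θ, sqrt_nonneg α]
  refine ⟨((√α + 1) ^ 2)⁻¹, by positivity, fun z hz => ?_⟩
  have hq : |z| * (√α + 1) ^ 2 < 1 :=
    calc |z| * (√α + 1) ^ 2 < ((√α + 1) ^ 2)⁻¹ * (√α + 1) ^ 2 := by gcongr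
      _ = 1 := inv_mul_cancel₀ (by positivity)
  have hterm : ∀ k, m (k + 1) * z ^ (k + 1) = ∫ θ in 0..π,
      z * (α + 1 + 2 * √α * cos θ + α - 1) / (2 * π) *
        (z * (α + 1 + 2 * √α * cos θ)) ^ k := by
    intro k
    rw [hm, wishart_moment_succ_eq_integral_cos hα₀, ← intervalIntegral.integral_mul_const]
    congr 1 with θ
    rw [mul_pow]
    ring
  have hsum := hasSum_intervalIntegral_mul_pow (a := 0) (b := π)
    (g := fun θ => z * (α + 1 + 2 * √α * cos θ))
    (h := fun θ => z * (α + 1 + 2 * √α * cos θ + α - 1) / (2 * π))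
    (by fun_prop) (by fun_prop)
    (by positivity) hq fun θ _ => by rw [abs_mul]; gcongr; exact hg θ
  simp only [← hterm] at hsum
  have hz : |2 * √α * z| < 1 - (α + 1) * z := by
    rw [abs_mul, abs_of_nonneg (by positivity : 0 ≤ 2 * √α)]
    nlinarith [le_abs_self z, abs_nonneg z]
  refine ⟨hsum.summable, ?_⟩
  rw [hsum.tsum_eq, integral_wishart_resolvent hα₀.le hz]
  ring
end

section
/- On the space F([a,b]) of real-valued functions supported on [a,b] satisfying the 1-Lipschitz condition |f(x₁) − f(x₂)| ≤ |x₁ − x₂|, the weak topology defined by the functionals f ↦ ∫_a^b f(x)x^k dx, k = 0,1,2,..., coincides with the topology of uniform convergence; in particular, if f_n, f ∈ F([a,b]) and ∫ f_n(x)x^k dx → ∫ f(x)x^k dx for all k ≥ 0, then f_n → f uniformly on [a,b]. -/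
/-!
The 1-Lipschitz functions vanishing outside `[a,b]` form an equicontinuous family which is closed
and pointwise bounded in `ℝ^ℝ`; by Tychonoff it is pointwise compact, and on an equicontinuous
family pointwise convergence is uniform on the compact set `[a,b]` (Arzelà–Ascoli), hence uniform
on `ℝ`. So `F([a,b])` is compact for the uniform topology. The moment map into `ℝ^ℕ` is
continuous for that topology, and injective because a continuous `h` with vanishing moments is
orthogonal to every polynomial, hence (Weierstrass) to itself. A continuous injection of a compact
space into a Hausdorff space is an embedding, which is the equality of topologies; the sequential
statement is read off from it.
-/

open Set Filter Topology intervalIntegral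
open scoped Interval UniformConvergence

theorem TendstoUniformlyOn.mul_right_of_norm_le {ι α R : Type*} [SeminormedRing R]
    {F : ι → α → R} {f w : α → R} {l : Filter ι} {s : Set α} {C : ℝ}
    (hF : TendstoUniformlyOn F f l s) (hw : ∀ x ∈ s, ‖w x‖ ≤ C) :
    TendstoUniformlyOn (fun i x => F i x * w x) (fun x => f x * w x) l s := by
  rw [Metric.tendstoUniformlyOn_iff] at hF ⊢
  intro ε hε
  filter_upwards [hF (ε / (|C| + 1)) (by positivity)] with i hi x hx
  calc dist (f x * w x) (F i x * w x) = ‖(f x - F i x) * w x‖ := by rw [dist_eq_norm, sub_mul]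
    _ ≤ dist (f x) (F i x) * |C| := by
      rw [dist_eq_norm]
      exact (norm_mul_le _ _).trans
        (mul_le_mul_of_nonneg_left ((hw x hx).trans (le_abs_self C)) (norm_nonneg _))
    _ ≤ ε / (|C| + 1) * |C| := by gcongr; exact (hi x hx).le
    _ < ε := by
      rw [div_mul_eq_mul_div, div_lt_iff₀ (by positivity)]
      nlinarith

theorem UniformFun.continuousOn_intervalIntegral_mul {w : ℝ → ℝ} {a b : ℝ}
    (hw : ContinuousOn w [[a, b]]) :
    ContinuousOn (fun f : ℝ →ᵤ ℝ => ∫ x in a..b, toFun f x * w x)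
      {f | ContinuousOn (toFun f) [[a, b]]} := by
  intro f _
  obtain ⟨C, hC⟩ := isCompact_uIcc.exists_bound_of_continuousOn hw
  have hunif : TendstoUniformly (fun g : ℝ →ᵤ ℝ => toFun g) (toFun f)
      (𝓝[{f | ContinuousOn (toFun f) [[a, b]]}] f) :=
    UniformFun.tendsto_iff_tendstoUniformly.mp (tendsto_id.mono_left nhdsWithin_le_nhds)
  exact (hunif.tendstoUniformlyOn.mul_right_of_norm_le hC).tendsto_intervalIntegral_of_continuousOn
    (eventually_nhdsWithin_of_forall fun g hg => hg.mul hw)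

theorem integral_mul_self_eq_zero_of_integral_mul_pow_eq_zero {h : ℝ → ℝ} {a b : ℝ}
    (hh : ContinuousOn h [[a, b]]) (hmom : ∀ k : ℕ, ∫ x in a..b, h x * x ^ k = 0) :
    ∫ x in a..b, h x * h x = 0 := by
  obtain ⟨M, hM⟩ := isCompact_uIcc.exists_bound_of_continuousOn hh
  have hM0 : 0 ≤ M := (norm_nonneg _).trans (hM a left_mem_uIcc)
  have hint : ∀ g : ℝ → ℝ, ContinuousOn g [[a, b]] →
      IntervalIntegrable (fun x => h x * g x) MeasureTheory.volume a b :=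
    fun g hg => (hh.mul hg).intervalIntegrable
  have hbound : ∀ δ > 0, ‖∫ x in a..b, h x * h x‖ ≤ M * δ * |b - a| := by
    intro δ hδ
    obtain ⟨p, hp⟩ := exists_polynomial_near_of_continuousOn _ _ h hh δ hδ
    have hpoly : ∫ x in a..b, h x * p.eval x = 0 := by
      simp_rw [Polynomial.eval_eq_sum_range, Finset.mul_sum]
      rw [integral_finsetSum fun i _ => hint (fun x => p.coeff i * x ^ i) (by fun_prop)]
      refine Finset.sum_eq_zero fun i _ => ?_
      simp_rw [mul_left_comm (h _), integral_const_mul, hmom, mul_zero]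
    have hsub : ∫ x in a..b, h x * h x = ∫ x in a..b, h x * (h x - p.eval x) := by
      simp_rw [mul_sub]
      rw [integral_sub (hint h hh) (hint _ (Polynomial.continuousOn _)), hpoly, sub_zero]
    rw [hsub]
    refine norm_integral_le_of_norm_le_const fun x hx => ?_
    rw [norm_mul, Real.norm_eq_abs (_ - _), abs_sub_comm]
    exact mul_le_mul (hM x (uIoc_subset_uIcc hx)) (hp x (uIoc_subset_uIcc hx)).le
      (abs_nonneg _) hM0
  have hlim : Tendsto (fun δ => M * δ * |b - a|) (𝓝[>] 0) (𝓝 0) :=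
    tendsto_nhdsWithin_of_tendsto_nhds (Continuous.tendsto' (by fun_prop) _ _ (by simp))
  exact norm_le_zero_iff.mp (ge_of_tendsto hlim (eventually_nhdsWithin_of_forall hbound))

theorem eqOn_zero_of_integral_mul_pow_eq_zero {h : ℝ → ℝ} {a b : ℝ} (hab : a < b)
    (hh : ContinuousOn h (Icc a b)) (hmom : ∀ k : ℕ, ∫ x in a..b, h x * x ^ k = 0) :
    EqOn h 0 (Icc a b) := by
  have hsq := integral_mul_self_eq_zero_of_integral_mul_pow_eq_zero
    (by rwa [uIcc_of_le hab.le]) hmom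
  intro x hx
  by_contra hne
  exact (integral_pos hab (hh.mul hh) (fun y _ => mul_self_nonneg _)
    ⟨x, hx, mul_self_pos.mpr hne⟩).ne' hsq

theorem eq_of_integral_mul_pow_eq {a b : ℝ} {f g : ℝ → ℝ}
    (hf : Continuous f) (hg : Continuous g)
    (hf0 : ∀ x ∉ Icc a b, f x = 0) (hg0 : ∀ x ∉ Icc a b, g x = 0)
    (hfg : ∀ k : ℕ, ∫ x in a..b, f x * x ^ k = ∫ x in a..b, g x * x ^ k) : f = g := by
  -- `{a, b}ᶜ` is dense, so the endpoints and the degenerate intervals `b ≤ a` are handled by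
  -- continuity.
  refine hf.ext_on ((toFinite {a, b}).countable.dense_compl ℝ) hg fun x hx => ?_
  by_cases hxI : x ∈ Icc a b
  · have hab : a < b := by
      simp only [mem_compl_iff, mem_insert_iff, mem_singleton_iff, not_or] at hx
      exact (lt_of_le_of_ne hxI.1 (Ne.symm hx.1)).trans_le hxI.2
    have hmom : ∀ k : ℕ, ∫ x in a..b, (f x - g x) * x ^ k = 0 := fun k => by
      simp_rw [sub_mul]
      rw [integral_sub (f := fun x => f x * x ^ k) (g := fun x => g x * x ^ k)
        ((hf.mul (continuous_pow k)).intervalIntegrable _ _)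
        ((hg.mul (continuous_pow k)).intervalIntegrable _ _), hfg k, sub_self]
    exact sub_eq_zero.mp
      (eqOn_zero_of_integral_mul_pow_eq_zero hab (hf.sub hg).continuousOn hmom hxI)
  · rw [hf0 x hxI, hg0 x hxI]

theorem tendsto_uniformFun_of_tendsto_of_equicontinuousOn {ι X α : Type*}
    [TopologicalSpace X] [UniformSpace α] {F : ι → X → α} {f : X → α} {K : Set X}
    {l : Filter ι} (hK : IsCompact K) (hF : EquicontinuousOn F K)
    (hout : ∀ i, ∀ x ∉ K, F i x = f x) (hlim : Tendsto F l (𝓝 f)) :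
    Tendsto (UniformFun.ofFun ∘ F) l (𝓝 (UniformFun.ofFun f)) := by
  have hlimK : TendstoUniformlyOn F f l K := by
    have := (EquicontinuousOn.tendsto_uniformOnFun_iff_pi' (𝔖 := {K}) (by simpa using hK)
      (by simpa using hF) l f).mpr
        ((continuous_pi fun x => continuous_apply _).tendsto f |>.comp hlim)
    exact UniformOnFun.tendsto_iff_tendstoUniformlyOn.mp this K rfl
  rw [UniformFun.tendsto_iff_tendstoUniformly]
  intro u hu
  filter_upwards [hlimK u hu] with i hi x
  by_cases hx : x ∈ K
  · exact hi x hx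
  · simpa [hout i x hx] using refl_mem_uniformity hu

section

variable {X : Type*} [PseudoMetricSpace X]

/-- The paper's `F([a,b])` is `lipschitzOneVanishingOutside (Icc a b)`. -/
def lipschitzOneVanishingOutside (K : Set X) : Set (X → ℝ) :=
  {f | LipschitzWith 1 f ∧ ∀ x ∉ K, f x = 0}

theorem isCompact_lipschitzOneVanishingOutside {K : Set X} {y : X} (hy : y ∉ K) :
    IsCompact (lipschitzOneVanishingOutside K) := by
  have hvanish : IsClosed {f : X → ℝ | ∀ x ∉ K, f x = 0} := by
    simp only [ofPred_forall]
    exact isClosed_iInter fun x => isClosed_iInter fun _ =>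
      isClosed_eq (continuous_apply x) continuous_const
  have hclosed : IsClosed (lipschitzOneVanishingOutside K) :=
    (isClosed_setOfPred_lipschitzWith 1).inter hvanish
  refine (isCompact_univ_pi fun x => isCompact_closedBall (0 : ℝ) (dist x y)).of_isClosed_subset
    hclosed fun f ⟨hf, hf0⟩ x _ => ?_
  simpa [Metric.mem_closedBall, hf0 y hy] using hf.dist_le_mul x y

theorem isCompact_image_ofFun_lipschitzOneVanishingOutside {K : Set X} {y : X}
    (hK : IsCompact K) (hy : y ∉ K) :
    IsCompact (UniformFun.ofFun '' lipschitzOneVanishingOutside K) := by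
  refine (isCompact_lipschitzOneVanishingOutside hy).image_of_continuousOn ?_
  rw [continuousOn_iff_continuous_domRestrict, continuous_iff_continuousAt]
  intro f
  refine tendsto_uniformFun_of_tendsto_of_equicontinuousOn hK ?_ (fun g x hx => ?_)
    continuous_subtype_val.continuousAt
  · exact (LipschitzWith.uniformEquicontinuous _ 1 fun g => g.2.1).equicontinuous
      |>.equicontinuousOn K
  · rw [g.2.2 x hx, f.2.2 x hx]

end

/-- On the space `F([a,b])` of real-valued `1`-Lipschitz functions supported on `[a,b]`, the
weak topology defined by the moment functionals `f ↦ ∫_a^b f(x)xᵏ dx`, `k = 0,1,2,…`, coincides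
with the topology of uniform convergence; in particular, convergence of all moments implies
uniform convergence on `[a,b]`. -/
theorem moment_topology_eq_uniform_topology (a b : ℝ) :
    (TopologicalSpace.induced
        (fun f : {f : ℝ → ℝ // LipschitzWith 1 f ∧ ∀ x ∉ Set.Icc a b, f x = 0} =>
          fun k : ℕ => ∫ x in a..b, f.1 x * x ^ k)
        (inferInstance : TopologicalSpace (ℕ → ℝ))
      = TopologicalSpace.induced
        (fun f : {f : ℝ → ℝ // LipschitzWith 1 f ∧ ∀ x ∉ Set.Icc a b, f x = 0} =>
          UniformFun.ofFun f.1)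
        (inferInstance : TopologicalSpace (UniformFun ℝ ℝ))) ∧
    (∀ (F : ℕ → ℝ → ℝ) (f : ℝ → ℝ),
      (∀ n, LipschitzWith 1 (F n)) → (∀ n, ∀ x ∉ Set.Icc a b, F n x = 0) →
      LipschitzWith 1 f → (∀ x ∉ Set.Icc a b, f x = 0) →
      (∀ k : ℕ, Filter.Tendsto (fun n => ∫ x in a..b, F n x * x ^ k)
        Filter.atTop (nhds (∫ x in a..b, f x * x ^ k))) →
      TendstoUniformlyOn F f Filter.atTop (Set.Icc a b)) := by
  let _ : TopologicalSpace (lipschitzOneVanishingOutside (Icc a b)) :=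
    .induced (fun f => UniformFun.ofFun f.1) inferInstance
  have : CompactSpace (lipschitzOneVanishingOutside (Icc a b)) := by
    rw [← isCompact_univ_iff, (IsInducing.induced _).isCompact_iff, image_univ,
      ← image_eq_range]
    exact isCompact_image_ofFun_lipschitzOneVanishingOutside isCompact_Icc (y := b + 1) (by simp)
  have hcont : Continuous fun f : lipschitzOneVanishingOutside (Icc a b) =>
      fun k : ℕ => ∫ x in a..b, f.1 x * x ^ k :=
    continuous_pi fun k => (UniformFun.continuousOn_intervalIntegral_mul
      (continuous_pow k).continuousOn).comp_continuous continuous_induced_dom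
      fun f => f.2.1.continuous.continuousOn
  have hinj : Function.Injective fun f : lipschitzOneVanishingOutside (Icc a b) =>
      fun k : ℕ => ∫ x in a..b, f.1 x * x ^ k := fun f g hfg =>
    Subtype.ext (eq_of_integral_mul_pow_eq f.2.1.continuous g.2.1.continuous f.2.2 g.2.2
      (congrFun hfg))
  have hemb := hcont.isClosedEmbedding hinj
  refine ⟨hemb.eq_induced.symm, fun F f hF hF0 hf hf0 hmom => ?_⟩
  have hlim : Tendsto (fun n => (⟨F n, hF n, hF0 n⟩ : lipschitzOneVanishingOutside (Icc a b)))
      atTop (𝓝 ⟨f, hf, hf0⟩) :=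
    hemb.isInducing.tendsto_nhds_iff.mpr (tendsto_pi_nhds.mpr hmom)
  exact (UniformFun.tendsto_iff_tendstoUniformly.mp
    ((IsInducing.induced _).tendsto_nhds_iff.mp hlim)).tendstoUniformlyOn
end
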